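/- arXiv:2201.05361 — 2 statements merged into one kernel-verified Lean document; each statement's English description precedes it below -/
import Mathlib

section
/- Let C be a rigid monoidal category and X ∈ C an object such that the functor (- ⊗ X) : C → C is an equivalence of categories. Then X is invertible, i.e. its left evaluation and coevaluation morphisms are isomorphisms. -/
/-!
The duality `X ⊣ Xᘁ` gives an adjunction `tensorRight X ⊣ tensorRight Xᘁ`. If the left adjoint is
an equivalence, so is the right adjoint, and both are fully faithful, so unit and counit are
isomorphisms. Evaluated at `𝟙_ C`, unit and counit are the coevaluation and evaluation up to
unitors and associators.
-/

open CategoryTheory MonoidalCategory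

namespace CategoryTheory.MonoidalCategory

variable {C : Type*} [Category C] [MonoidalCategory C]

lemma isIso_of_isIso_unit_whiskerLeft {Y Z : C} (f : Y ⟶ Z) [IsIso (𝟙_ C ◁ f)] : IsIso f := by
  have hf : f = (λ_ Y).inv ≫ 𝟙_ C ◁ f ≫ (λ_ Z).hom := by simp
  rw [hf]
  infer_instance

lemma tensorRightAdjunction_unit_app (Y Y' Z : C) [ExactPairing Y Y'] :
    (tensorRightAdjunction Y Y').unit.app Z = (ρ_ Z).inv ≫ Z ◁ η_ Y Y' ≫ (α_ Z Y Y').inv := by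
  simp [tensorRightAdjunction, tensorRightHomEquiv, Adjunction.mkOfHomEquiv]

lemma tensorRightAdjunction_counit_app (Y Y' Z : C) [ExactPairing Y Y'] :
    (tensorRightAdjunction Y Y').counit.app Z = (α_ Z Y' Y).hom ≫ Z ◁ ε_ Y Y' ≫ (ρ_ Z).hom := by
  simp [tensorRightAdjunction, tensorRightHomEquiv, Adjunction.mkOfHomEquiv]

variable (Y Y' : C) [ExactPairing Y Y'] [(tensorRight Y).IsEquivalence]

lemma isIso_coevaluation_of_isEquivalence_tensorRight : IsIso (η_ Y Y') := by
  have hunit : IsIso ((ρ_ (𝟙_ C)).inv ≫ 𝟙_ C ◁ η_ Y Y' ≫ (α_ (𝟙_ C) Y Y').inv) := by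
    rw [← tensorRightAdjunction_unit_app]
    infer_instance
  have : IsIso (𝟙_ C ◁ η_ Y Y') := by
    simpa only [isIso_comp_left_iff, isIso_comp_right_iff] using hunit
  exact isIso_of_isIso_unit_whiskerLeft _

lemma isIso_evaluation_of_isEquivalence_tensorRight : IsIso (ε_ Y Y') := by
  have : (tensorRight Y').IsEquivalence :=
    (tensorRightAdjunction Y Y').isEquivalence_right_of_isEquivalence_left
  have hcounit : IsIso ((α_ (𝟙_ C) Y' Y).hom ≫ 𝟙_ C ◁ ε_ Y Y' ≫ (ρ_ (𝟙_ C)).hom) := by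
    rw [← tensorRightAdjunction_counit_app]
    infer_instance
  have : IsIso (𝟙_ C ◁ ε_ Y Y') := by
    simpa only [isIso_comp_left_iff, isIso_comp_right_iff] using hcounit
  exact isIso_of_isIso_unit_whiskerLeft _

end CategoryTheory.MonoidalCategory

/-- In a rigid monoidal category, if `(- ⊗ X)` is an equivalence of categories, then `X` is
invertible: its (left) evaluation and coevaluation morphisms are isomorphisms. -/
theorem invertible_of_tensorRight_equivalence {C : Type*} [Category C] [MonoidalCategory C]
    [RigidCategory C] (X : C) (h : (tensorRight X).IsEquivalence) :
    IsIso (ε_ X Xᘁ) ∧ IsIso (η_ X Xᘁ) :=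
  ⟨isIso_evaluation_of_isEquivalence_tensorRight X Xᘁ,
    isIso_coevaluation_of_isEquivalence_tensorRight X Xᘁ⟩
end

section
/- If X is a symmetric object of the Drinfeld centre of a rigid monoidal category (σ_{X,Y}⁻¹ = σ_{Y,X} for all Y), then its left dual ∗X is symmetric as well: σ_{∗X,Y}⁻¹ = σ_{Y,∗X} for all Y in Z(C). Consequently the full subcategory of symmetric objects of Z(C) is rigid. -/
/-!
For an exact pairing `(X, X')`, an endomorphism of `X' ⊗ Y` is determined by its whiskering with
`X` precomposed with the coevaluation `η : 𝟙 ⟶ X ⊗ X'` (the duality adjunction). The hexagon identities split the braiding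
of `X ⊗ X'` with `Y` into braidings with `X` and with `X'`; the trivial double braiding of `X`
cancels the `X`-part, and naturality of the braiding then slides `η` through, where the braiding
with the unit is trivial. Left duals are right duals with the pairing swapped.
-/

open CategoryTheory MonoidalCategory

universe v u

variable {C : Type u} [Category.{v} C] [MonoidalCategory C]

/-- An object of the Drinfeld centre is symmetric if the braiding (half-braiding) with every
object of the centre is "trivial": `σ_{X,Y}⁻¹ = σ_{Y,X}`. -/
def IsSymmetricObj (X : Center C) : Prop :=
  ∀ Y : Center C, (β_ X Y).symm = β_ Y X

section Braided

open BraidedCategory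

variable {D : Type*} [Category D] [MonoidalCategory D] [BraidedCategory D]

theorem braiding_hom_comp_braiding_hom_eq_id_of_exactPairing (X X' : D) [ExactPairing X X']
    (h : ∀ Y : D, (β_ X Y).inv = (β_ Y X).hom) (Y : D) :
    (β_ X' Y).hom ≫ (β_ Y X').hom = 𝟙 (X' ⊗ Y) := by
  apply (tensorLeftHomEquiv Y X X' (X' ⊗ Y)).injective
  dsimp only [tensorLeftHomEquiv, Equiv.coe_fn_mk]
  simp only [MonoidalCategory.whiskerLeft_id, Category.comp_id]
  congr 1
  calc η_ X X' ▷ Y ≫ (α_ X X' Y).hom ≫ X ◁ ((β_ X' Y).hom ≫ (β_ Y X').hom)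
      = η_ X X' ▷ Y ≫ ((β_ (X ⊗ X') Y).hom ≫ (α_ Y X X').inv ≫ (β_ X Y).inv ▷ X' ≫
          (α_ X Y X').hom) ≫ X ◁ (β_ Y X').hom := by
        rw [braiding_tensor_left_hom]
        simp
    _ = (β_ (𝟙_ D) Y).hom ≫ Y ◁ η_ X X' ≫ ((α_ Y X X').inv ≫ (β_ Y X).hom ▷ X' ≫
          (α_ X Y X').hom ≫ X ◁ (β_ Y X').hom) := by
        simp only [Category.assoc]
        rw [braiding_naturality_left_assoc, h Y]
    _ = (β_ (𝟙_ D) Y).hom ≫ Y ◁ η_ X X' ≫ (β_ Y (X ⊗ X')).hom ≫ (α_ X X' Y).hom := by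
        rw [braiding_tensor_right_hom]
        simp
    _ = (β_ (𝟙_ D) Y).hom ≫ (β_ Y (𝟙_ D)).hom ≫ η_ X X' ▷ Y ≫ (α_ X X' Y).hom := by
        rw [braiding_naturality_right_assoc]
    _ = η_ X X' ▷ Y ≫ (α_ X X' Y).hom := by
        rw [braiding_tensorUnit_left, braiding_tensorUnit_right]
        simp

theorem braiding_symm_eq_of_exactPairing (X X' : D) [ExactPairing X X']
    (h : ∀ Y : D, (β_ X Y).symm = β_ Y X) (Y : D) :
    (β_ X' Y).symm = β_ Y X' := by
  have hX : ∀ Y : D, (β_ X Y).inv = (β_ Y X).hom := fun Y => congrArg Iso.hom (h Y)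
  ext
  exact Iso.inv_ext (braiding_hom_comp_braiding_hom_eq_id_of_exactPairing X X' hX Y)

theorem braiding_symm_eq_of_exactPairing_swap (X X' : D) [ExactPairing X' X]
    (h : ∀ Y : D, (β_ X Y).symm = β_ Y X) (Y : D) :
    (β_ X' Y).symm = β_ Y X' :=
  have : ExactPairing X X' := exactPairing_swap X' X
  braiding_symm_eq_of_exactPairing X X' h Y

end Braided

theorem symmetric_closed_under_duals_general :
    (∀ (X X' : Center C), ExactPairing X X' → IsSymmetricObj X → IsSymmetricObj X') ∧
    (∀ (X X' : Center C), ExactPairing X' X → IsSymmetricObj X → IsSymmetricObj X') ∧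
    (RigidCategory (Center C) →
      ∀ X : Center C, IsSymmetricObj X →
        (∃ X' : Center C, IsSymmetricObj X' ∧ Nonempty (ExactPairing X X')) ∧
        (∃ X' : Center C, IsSymmetricObj X' ∧ Nonempty (ExactPairing X' X))) := by
  refine ⟨fun X X' _ h => braiding_symm_eq_of_exactPairing X X' h,
    fun X X' _ h => braiding_symm_eq_of_exactPairing_swap X X' h, fun _ X h => ⟨?_, ?_⟩⟩
  · exact ⟨Xᘁ, braiding_symm_eq_of_exactPairing X Xᘁ h, ⟨inferInstance⟩⟩
  · exact ⟨ᘁX, braiding_symm_eq_of_exactPairing_swap X (ᘁX) h, ⟨inferInstance⟩⟩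

/-- If `X` is a symmetric object of the Drinfeld centre of a rigid monoidal category, then
any left dual `∗X` of `X` in `Z(C)` is symmetric, and likewise any right dual.  Consequently
(assuming `Z(C)` is rigid, as it is when `C` is rigid) every symmetric object admits symmetric
left and right duals, so the full subcategory of symmetric objects of `Z(C)` is rigid. -/
theorem symmetric_closed_under_duals [RigidCategory C] :
    (∀ (X X' : Center C), ExactPairing X X' → IsSymmetricObj X → IsSymmetricObj X') ∧
    (∀ (X X' : Center C), ExactPairing X' X → IsSymmetricObj X → IsSymmetricObj X') ∧
    (RigidCategory (Center C) →
      ∀ X : Center C, IsSymmetricObj X →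
        (∃ X' : Center C, IsSymmetricObj X' ∧ Nonempty (ExactPairing X X')) ∧
        (∃ X' : Center C, IsSymmetricObj X' ∧ Nonempty (ExactPairing X' X))) :=
  symmetric_closed_under_duals_general
end
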